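/- For every natural number m ≥ 3, B_m ⊆ B_2. That is, if there exists x ∈ [0,1/(q-1)] having exactly m expansions in base q with 3 ≤ m < ∞, then there exists x' ∈ [0,1/(q-1)] having exactly two expansions in base q. -/

import Mathlib

/-!
Reading off the first digit gives `#E(x) = #E(qx) + #E(qx - 1)`, where `E(x)` is the set of
expansions of `x`. Given two distinct expansions of a point with finitely many `n ≥ 3`
expansions, follow their common prefix: the numbers of expansions do not increase along the
way and at the first disagreement both branches are nonempty. There the count splits as
`n₀ + n₁ ≤ n` with `n₀, n₁ ≥ 1`, so either it equals `2` or one branch has a count in `[2, n)`,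
and strong induction on `n` finishes.
-/

noncomputable section

/-- `a` is an expansion of `x` in base `q`: all digits `a n` lie in `{0,1}` and
`x = Σ_{n≥1} a_n q^{-n}` (here `a n` is the `(n+1)`-st digit, i.e. indexing is 0-based). -/
def IsExpansion (q x : ℝ) (a : ℕ → ℕ) : Prop :=
  (∀ n, a n ≤ 1) ∧ x = ∑' n : ℕ, (a n : ℝ) / q ^ (n + 1)

/-- The set of expansions of `x` in base `q`. -/
def expansionsOf (q x : ℝ) : Set (ℕ → ℕ) := {a | IsExpansion q x a}

/-- `U_q`: the set of `x ∈ [0, 1/(q-1)]` having a unique expansion in base `q`. -/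
def uniqueExpansionSet (q : ℝ) : Set ℝ :=
  {x | x ∈ Set.Icc 0 (1 / (q - 1)) ∧ ∃! a, IsExpansion q x a}

/-- `B_m` (for finite `m`): bases `q ∈ (G, 2)` for which some `x ∈ I_q` has exactly `m`
expansions in base `q`. -/
def B (m : ℕ) : Set ℝ :=
  {q | q ∈ Set.Ioo ((1 + Real.sqrt 5) / 2) 2 ∧
    ∃ x ∈ Set.Icc (0:ℝ) (1 / (q - 1)), Cardinal.mk (expansionsOf q x) = m}

/-- `B_{ℵ₀}`: bases `q ∈ (G, 2)` for which some `x ∈ I_q` has exactly countably infinitely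
many expansions in base `q`. -/
def Baleph0 : Set ℝ :=
  {q | q ∈ Set.Ioo ((1 + Real.sqrt 5) / 2) 2 ∧
    ∃ x ∈ Set.Icc (0:ℝ) (1 / (q - 1)), Cardinal.mk (expansionsOf q x) = Cardinal.aleph0}

/-- The Thue–Morse sequence: `thueMorse n` is the parity of the number of 1s in the
binary expansion of `n`. -/
def thueMorse (n : ℕ) : ℕ := ((Nat.digits 2 n).count 1) % 2

/-- A digit `a m` of an expansion of `x` in base `q` is forced if every expansion of `x`
agreeing with `a` before position `m` also agrees at position `m`. -/
def Forced (q x : ℝ) (a : ℕ → ℕ) (m : ℕ) : Prop :=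
  ∀ c : ℕ → ℕ, IsExpansion q x c → (∀ i < m, c i = a i) → c m = a m

def prependDigit (d : ℕ) (b : ℕ → ℕ) : ℕ → ℕ := Stream'.cons d b

@[simp]
lemma prependDigit_zero (d : ℕ) (b : ℕ → ℕ) : prependDigit d b 0 = d := rfl

lemma prependDigit_head_tail (a : ℕ → ℕ) : prependDigit (a 0) (fun n => a (n + 1)) = a :=
  Stream'.eta a

lemma prependDigit_injective (d : ℕ) : Function.Injective (prependDigit d) :=
  Stream'.cons_injective_right d

@[simp]
lemma mem_expansionsOf {q x : ℝ} {a : ℕ → ℕ} : a ∈ expansionsOf q x ↔ IsExpansion q x a :=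
  Iff.rfl

section Expansion

variable {q : ℝ}

lemma summable_digits (hq : 1 < q) {a : ℕ → ℕ} (ha : ∀ n, a n ≤ 1) :
    Summable fun n => (a n : ℝ) / q ^ (n + 1) := by
  have hq0 : 0 < q := zero_lt_one.trans hq
  have hgeom : Summable fun n : ℕ => q⁻¹ ^ (n + 1) :=
    (summable_nat_add_iff 1).mpr
      (summable_geometric_of_lt_one (by positivity) (inv_lt_one_of_one_lt₀ hq))
  refine hgeom.of_nonneg_of_le (fun n => by positivity) fun n => ?_
  rw [inv_pow, ← one_div]
  gcongr
  exact_mod_cast ha n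

lemma tsum_one_div_pow_succ (hq : 1 < q) :
    ∑' n : ℕ, (1 : ℝ) / q ^ (n + 1) = 1 / (q - 1) := by
  have hq0 : 0 < q := zero_lt_one.trans hq
  simp_rw [one_div, ← inv_pow, pow_succ, tsum_mul_right,
    tsum_geometric_of_lt_one (by positivity) (inv_lt_one_of_one_lt₀ hq)]
  have : q - 1 ≠ 0 := by linarith
  field_simp

lemma IsExpansion.mem_Icc (hq : 1 < q) {x : ℝ} {a : ℕ → ℕ} (ha : IsExpansion q x a) :
    x ∈ Set.Icc 0 (1 / (q - 1)) := by
  obtain ⟨hdig, rfl⟩ := ha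
  have hq0 : 0 < q := zero_lt_one.trans hq
  refine ⟨tsum_nonneg fun n => by positivity, ?_⟩
  rw [← tsum_one_div_pow_succ hq]
  refine (summable_digits hq hdig).tsum_le_tsum (fun n => ?_)
    (by simpa using summable_digits hq (a := fun _ => 1) fun _ => le_rfl)
  gcongr
  exact_mod_cast hdig n

lemma tsum_digits_eq_head_add_tail (hq : 1 < q) {a : ℕ → ℕ} (ha : ∀ n, a n ≤ 1) :
    ∑' n, (a n : ℝ) / q ^ (n + 1) = (a 0 + ∑' n, (a (n + 1) : ℝ) / q ^ (n + 1)) / q := by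
  rw [(summable_digits hq ha).tsum_eq_zero_add, add_div, ← tsum_div_const]
  congr 1
  · simp
  · refine tsum_congr fun n => ?_
    rw [pow_succ q (n + 1), div_div]

lemma isExpansion_iff_tail (hq : 1 < q) {x : ℝ} {a : ℕ → ℕ} :
    IsExpansion q x a ↔ a 0 ≤ 1 ∧ IsExpansion q (q * x - a 0) (fun n => a (n + 1)) := by
  have hq0 : q ≠ 0 := by positivity
  have hdig : (∀ n, a n ≤ 1) ↔ a 0 ≤ 1 ∧ ∀ n, a (n + 1) ≤ 1 :=
    ⟨fun h => ⟨h 0, fun n => h (n + 1)⟩, fun h n => n.casesOn h.1 h.2⟩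
  constructor
  · rintro ⟨ha, rfl⟩
    refine ⟨ha 0, fun n => ha (n + 1), ?_⟩
    rw [tsum_digits_eq_head_add_tail hq ha]
    field_simp
    ring
  · rintro ⟨ha0, hb, hx⟩
    have ha := hdig.mpr ⟨ha0, hb⟩
    refine ⟨ha, ?_⟩
    rw [tsum_digits_eq_head_add_tail hq ha]
    rw [← hx]
    field_simp
    ring

lemma isExpansion_prependDigit_iff (hq : 1 < q) {x : ℝ} {d : ℕ} {b : ℕ → ℕ} :
    IsExpansion q x (prependDigit d b) ↔ d ≤ 1 ∧ IsExpansion q (q * x - d) b :=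
  isExpansion_iff_tail hq

end Expansion

section Counting

open Cardinal

variable {q : ℝ}

lemma expansionsOf_eq_union (hq : 1 < q) (x : ℝ) :
    expansionsOf q x =
      prependDigit 0 '' expansionsOf q (q * x) ∪ prependDigit 1 '' expansionsOf q (q * x - 1) := by
  ext a
  constructor
  · intro ha
    obtain ⟨ha0, htail⟩ := (isExpansion_iff_tail hq).mp ha
    rcases Nat.le_one_iff_eq_zero_or_eq_one.mp ha0 with h | h
    · exact Or.inl ⟨_, by simpa [h] using htail, by simpa [h] using prependDigit_head_tail a⟩
    · exact Or.inr ⟨_, by simpa [h] using htail, by simpa [h] using prependDigit_head_tail a⟩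
  · rintro (⟨b, hb, rfl⟩ | ⟨b, hb, rfl⟩)
    · exact (isExpansion_prependDigit_iff hq).mpr ⟨zero_le_one, by simpa using hb⟩
    · exact (isExpansion_prependDigit_iff hq).mpr ⟨le_rfl, by simpa using hb⟩

lemma mk_expansionsOf_eq_add (hq : 1 < q) (x : ℝ) :
    #(expansionsOf q x) = #(expansionsOf q (q * x)) + #(expansionsOf q (q * x - 1)) := by
  have hdisj : Disjoint (prependDigit 0 '' expansionsOf q (q * x))
      (prependDigit 1 '' expansionsOf q (q * x - 1)) := by
    rw [Set.disjoint_left]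
    rintro _ ⟨b, -, rfl⟩ ⟨c, -, h⟩
    simpa using congrFun h 0
  rw [expansionsOf_eq_union hq, mk_union_of_disjoint hdisj,
    mk_image_eq (prependDigit_injective 0), mk_image_eq (prependDigit_injective 1)]

lemma mk_expansionsOf_sub_digit_le (hq : 1 < q) (x : ℝ) {d : ℕ} (hd : d ≤ 1) :
    #(expansionsOf q (q * x - d)) ≤ #(expansionsOf q x) := by
  rw [mk_expansionsOf_eq_add hq x]
  rcases Nat.le_one_iff_eq_zero_or_eq_one.mp hd with rfl | rfl <;> simp

lemma expansionsOf_nonempty_of_head_ne (hq : 1 < q) {x : ℝ} {a b : ℕ → ℕ}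
    (ha : IsExpansion q x a) (hb : IsExpansion q x b) (hab : a 0 ≠ b 0) :
    (expansionsOf q (q * x)).Nonempty ∧ (expansionsOf q (q * x - 1)).Nonempty := by
  obtain ⟨ha0, ha'⟩ := (isExpansion_iff_tail hq).mp ha
  obtain ⟨hb0, hb'⟩ := (isExpansion_iff_tail hq).mp hb
  obtain ⟨h0, h1⟩ | ⟨h1, h0⟩ : (a 0 = 0 ∧ b 0 = 1) ∨ (a 0 = 1 ∧ b 0 = 0) := by omega
  · exact ⟨⟨_, by simpa [h0] using ha'⟩, ⟨_, by simpa [h1] using hb'⟩⟩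
  · exact ⟨⟨_, by simpa [h0] using hb'⟩, ⟨_, by simpa [h1] using ha'⟩⟩

lemma exists_branching_point (hq : 1 < q) (k : ℕ) {x : ℝ} {a b : ℕ → ℕ}
    (ha : IsExpansion q x a) (hb : IsExpansion q x b) (hab : a k ≠ b k) :
    ∃ y, #(expansionsOf q y) ≤ #(expansionsOf q x) ∧
      (expansionsOf q (q * y)).Nonempty ∧ (expansionsOf q (q * y - 1)).Nonempty := by
  induction k generalizing x a b with
  | zero => exact ⟨x, le_rfl, expansionsOf_nonempty_of_head_ne hq ha hb hab⟩
  | succ k ih =>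
    by_cases h0 : a 0 = b 0
    · obtain ⟨ha0, ha'⟩ := (isExpansion_iff_tail hq).mp ha
      obtain ⟨-, hb'⟩ := (isExpansion_iff_tail hq).mp hb
      rw [← h0] at hb'
      obtain ⟨y, hy, hbranch⟩ := ih ha' hb' hab
      exact ⟨y, hy.trans (mk_expansionsOf_sub_digit_le hq x ha0), hbranch⟩
    · exact ⟨x, le_rfl, expansionsOf_nonempty_of_head_ne hq ha hb h0⟩

lemma exists_mk_expansionsOf_eq_two (hq : 1 < q) (n : ℕ) (hn : 2 ≤ n) {x : ℝ}
    (hx : #(expansionsOf q x) = n) : ∃ z, #(expansionsOf q z) = 2 := by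
  induction n using Nat.strong_induction_on generalizing x with
  | _ n ih =>
  obtain ⟨⟨a, ha⟩, ⟨b, hb⟩, hab⟩ : Nontrivial (expansionsOf q x) := by
    rw [← one_lt_iff_nontrivial, hx]
    exact_mod_cast hn
  obtain ⟨k, hk⟩ := Function.ne_iff.mp fun h => hab (Subtype.ext h)
  obtain ⟨y, hyx, hne0, hne1⟩ := exists_branching_point hq k ha hb hk
  have hy := mk_expansionsOf_eq_add hq y
  have hle : #(expansionsOf q (q * y)) + #(expansionsOf q (q * y - 1)) ≤ n := hy ▸ hx ▸ hyx
  obtain ⟨n0, -, hn0⟩ := exists_nat_eq_of_le_nat ((self_le_add_right _ _).trans hle)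
  obtain ⟨n1, -, hn1⟩ := exists_nat_eq_of_le_nat ((self_le_add_left _ _).trans hle)
  have hpos0 : n0 ≠ 0 := by
    rintro rfl
    exact mk_ne_zero_iff.mpr hne0.to_subtype hn0
  have hpos1 : n1 ≠ 0 := by
    rintro rfl
    exact mk_ne_zero_iff.mpr hne1.to_subtype hn1
  rw [hn0, hn1] at hle hy
  have hsum : n0 + n1 ≤ n := by exact_mod_cast hle
  by_cases htwo : n0 + n1 = 2
  · exact ⟨y, by rw [hy]; exact_mod_cast htwo⟩
  · by_cases h0 : 2 ≤ n0
    · exact ih n0 (by omega) h0 hn0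
    · exact ih n1 (by omega) (by omega) hn1

end Counting

theorem stmt5 : ∀ m : ℕ, 3 ≤ m → B m ⊆ B 2 := by
  rintro m hm q ⟨hqG, x, -, hx⟩
  have hq : 1 < q := Real.one_lt_goldenRatio.trans hqG.1
  obtain ⟨z, hz⟩ := exists_mk_expansionsOf_eq_two hq m (by omega) hx
  obtain ⟨⟨a, ha⟩⟩ : Nonempty (expansionsOf q z) := by
    rw [← Cardinal.mk_ne_zero_iff, hz]
    exact two_ne_zero
  exact ⟨hqG, z, ha.mem_Icc hq, by exact_mod_cast hz⟩
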